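/- Let A and B be n×n real symmetric positive semidefinite matrices. Then the squared operator norm of A − B is at most the operator norm of A² − B²; i.e., ‖A − B‖² ≤ ‖A² − B²‖. -/

import Mathlib

/-!
Write `C = A - B`. As `C` is self-adjoint, `‖C‖` is attained in absolute value by an eigenvalue
`μ`, and swapping `A` and `B` we may take `μ ≥ 0`. For an eigenvector `x` we have
`A x = B x + μ x`, hence
`⟪(A² - B²) x, x⟫ = ‖A x‖² - ‖B x‖² = μ² ‖x‖² + 2 μ ⟪B x, x⟫ ≥ μ² ‖x‖²`
because `B` is positive semidefinite, and the left side is at most `‖A² - B²‖ ‖x‖²`.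
-/

open scoped RealInnerProductSpace NNReal

/-- The operator (spectral) norm of a real `n × n` matrix, viewed as the norm of the
associated continuous linear map on Euclidean space. -/
noncomputable def opNorm {n : ℕ} (A : Matrix (Fin n) (Fin n) ℝ) : ℝ :=
  ‖(Matrix.toEuclideanCLM (𝕜 := ℝ) A : EuclideanSpace ℝ (Fin n) →L[ℝ] EuclideanSpace ℝ (Fin n))‖

namespace ContinuousLinearMap

section RCLike

variable {𝕜 E : Type*} [RCLike 𝕜] [NormedAddCommGroup E] [InnerProductSpace 𝕜 E]

theorem norm_le_of_forall_mem_spectrum [CompleteSpace E] {T : E →L[𝕜] E}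
    (hT : IsSelfAdjoint T) {r : ℝ} (hr : 0 ≤ r) (h : ∀ μ ∈ spectrum 𝕜 T, ‖μ‖ ≤ r) :
    ‖T‖ ≤ r := by
  lift r to ℝ≥0 using hr
  have : spectralRadius 𝕜 T ≤ r := iSup₂_le fun μ hμ ↦ ENNReal.coe_le_coe.mpr (h μ hμ)
  rw [T.spectralRadius_eq_nnnorm hT, ENNReal.coe_le_coe] at this
  exact this

theorem exists_ne_zero_apply_eq_smul_of_mem_spectrum [FiniteDimensional 𝕜 E] {T : E →L[𝕜] E}
    {μ : 𝕜} (hμ : μ ∈ spectrum 𝕜 T) : ∃ x, x ≠ 0 ∧ T x = μ • x := by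
  have := FiniteDimensional.complete 𝕜 E
  rw [spectrum_eq, ← Module.End.hasEigenvalue_iff_mem_spectrum] at hμ
  obtain ⟨x, hx_mem, hx_ne⟩ := hμ.exists_hasEigenvector
  exact ⟨x, hx_ne, Module.End.mem_eigenspace_iff.mp hx_mem⟩

theorem norm_le_of_forall_apply_eq_smul [FiniteDimensional 𝕜 E] {T : E →L[𝕜] E}
    (hT : T.IsSymmetric) {r : ℝ} (hr : 0 ≤ r)
    (h : ∀ μ : 𝕜, ∀ x, x ≠ 0 → T x = μ • x → ‖μ‖ ≤ r) : ‖T‖ ≤ r := by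
  have := FiniteDimensional.complete 𝕜 E
  refine norm_le_of_forall_mem_spectrum (isSelfAdjoint_iff_isSymmetric.mpr hT) hr fun μ hμ ↦ ?_
  obtain ⟨x, hx, hTx⟩ := exists_ne_zero_apply_eq_smul_of_mem_spectrum hμ
  exact h μ x hx hTx

end RCLike

variable {E : Type*} [NormedAddCommGroup E] [InnerProductSpace ℝ E]

theorem inner_sq_sub_sq_apply_self {a b : E →L[ℝ] E} (ha : a.IsSymmetric) (hb : b.IsSymmetric)
    (x : E) : ⟪(a ^ 2 - b ^ 2) x, x⟫ = ‖a x‖ ^ 2 - ‖b x‖ ^ 2 := by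
  rw [sub_apply, inner_sub_left, sq, sq, mul_apply_eq_comp, mul_apply_eq_comp, ← coe_coe a, ha,
    ← coe_coe b, hb, coe_coe, coe_coe, real_inner_self_eq_norm_sq, real_inner_self_eq_norm_sq]

theorem sq_mul_norm_sq_le_inner_sq_sub_sq {a b : E →L[ℝ] E} (ha : a.IsSymmetric)
    (hb : b.IsPositive) {μ : ℝ} (hμ : 0 ≤ μ) {x : E} (hx : (a - b) x = μ • x) :
    μ ^ 2 * ‖x‖ ^ 2 ≤ ⟪(a ^ 2 - b ^ 2) x, x⟫ := by
  have hax : a x = b x + μ • x := by rw [← hx, sub_apply, add_sub_cancel]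
  have hbx : 0 ≤ ⟪b x, x⟫ := hb.inner_nonneg_left x
  rw [inner_sq_sub_sq_apply_self ha hb.isSymmetric, hax, norm_add_sq_real, inner_smul_right,
    norm_smul, Real.norm_of_nonneg hμ]
  nlinarith

theorem sq_le_norm_sq_sub_sq_of_apply_eq_smul {a b : E →L[ℝ] E} (ha : a.IsPositive)
    (hb : b.IsPositive) {μ : ℝ} {x : E} (hx₀ : x ≠ 0) (hx : (a - b) x = μ • x) :
    μ ^ 2 ≤ ‖a ^ 2 - b ^ 2‖ := by
  wlog hμ : 0 ≤ μ generalizing a b μ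
  · have hx' : (b - a) x = (-μ) • x := by rw [← neg_sub, neg_apply, hx, neg_smul]
    simpa [norm_sub_rev] using this hb ha hx' (by linarith)
  have hx_pos : 0 < ‖x‖ ^ 2 := by positivity
  refine le_of_mul_le_mul_right ?_ hx_pos
  calc μ ^ 2 * ‖x‖ ^ 2 ≤ ⟪(a ^ 2 - b ^ 2) x, x⟫ :=
        sq_mul_norm_sq_le_inner_sq_sub_sq ha.isSymmetric hb hμ hx
    _ ≤ ‖(a ^ 2 - b ^ 2) x‖ * ‖x‖ := real_inner_le_norm _ _
    _ ≤ ‖a ^ 2 - b ^ 2‖ * ‖x‖ ^ 2 := by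
        rw [pow_two ‖x‖, ← mul_assoc]; gcongr; exact le_opNorm _ _

theorem norm_sub_sq_le_norm_sq_sub_sq [FiniteDimensional ℝ E] {a b : E →L[ℝ] E}
    (ha : a.IsPositive) (hb : b.IsPositive) : ‖a - b‖ ^ 2 ≤ ‖a ^ 2 - b ^ 2‖ := by
  have hab : (a - b).IsSymmetric := ha.isSymmetric.sub hb.isSymmetric
  have hnorm : ‖a - b‖ ≤ √‖a ^ 2 - b ^ 2‖ :=
    norm_le_of_forall_apply_eq_smul hab (Real.sqrt_nonneg _) fun μ x hx₀ hx ↦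
      Real.abs_le_sqrt (sq_le_norm_sq_sub_sq_of_apply_eq_smul ha hb hx₀ hx)
  calc ‖a - b‖ ^ 2 ≤ √‖a ^ 2 - b ^ 2‖ ^ 2 := by gcongr
    _ = ‖a ^ 2 - b ^ 2‖ := Real.sq_sqrt (norm_nonneg _)

end ContinuousLinearMap

theorem Matrix.PosSemidef.isPositive_toEuclideanCLM {n : Type*} [Fintype n] [DecidableEq n]
    {A : Matrix n n ℝ} (hA : A.PosSemidef) : (toEuclideanCLM (𝕜 := ℝ) A).IsPositive := by
  rw [ContinuousLinearMap.isPositive_iff']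
  refine ⟨hA.isHermitian.isSelfAdjoint.map _, fun x ↦ ?_⟩
  rw [real_inner_comm, inner_toEuclideanCLM]
  exact hA.dotProduct_mulVec_nonneg _

/-- For symmetric positive semidefinite matrices `A`, `B`,
`‖A − B‖² ≤ ‖A² − B²‖` in operator norm. -/
theorem opNorm_sub_sq_le_opNorm_sq_sub {n : ℕ} (A B : Matrix (Fin n) (Fin n) ℝ)
    (hA : A.PosSemidef) (hB : B.PosSemidef) :
    opNorm (A - B) ^ 2 ≤ opNorm (A ^ 2 - B ^ 2) := by
  simpa only [opNorm, map_sub, map_pow] using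
    ContinuousLinearMap.norm_sub_sq_le_norm_sq_sub_sq hA.isPositive_toEuclideanCLM
      hB.isPositive_toEuclideanCLM
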